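/- Let G₁ be r₁-regular with n₁ vertices and m₁ edges, and let G₂ be any regular graph with n₂ vertices. Then 1 is a normalized Laplacian eigenvalue of the central vertex join G₁ ∨̇ G₂ with multiplicity at least m₁ - n₁ (assuming m₁ > n₁). -/

import Mathlib

open scoped Classical
open Polynomial Matrix

/-- The normalized Laplacian `L = I - D^{-1/2} A D^{-1/2}` of a finite simple graph. -/
noncomputable def normLap {V : Type*} [Fintype V] (G : SimpleGraph V) : Matrix V V ℝ :=
  1 - Matrix.diagonal (fun v => (Real.sqrt (G.degree v))⁻¹) * G.adjMatrix ℝ *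
      Matrix.diagonal (fun v => (Real.sqrt (G.degree v))⁻¹)

/-- `μ` is an eigenvalue of the matrix `M`. -/
def Matrix.IsEigenvalue {V : Type*} [Fintype V] (M : Matrix V V ℝ) (μ : ℝ) : Prop :=
  ∃ v : V → ℝ, v ≠ 0 ∧ M.mulVec v = μ • v

/-- The central graph `C(G)`: subdivide every edge of `G` once and join all
nonadjacent vertices of `G`. -/
def centralGraph {V : Type*} (G : SimpleGraph V) : SimpleGraph (V ⊕ G.edgeSet) where
  Adj x y :=
    match x, y with
    | Sum.inl v, Sum.inl w => v ≠ w ∧ ¬ G.Adj v w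
    | Sum.inl v, Sum.inr e => v ∈ (e : Sym2 V)
    | Sum.inr e, Sum.inl v => v ∈ (e : Sym2 V)
    | Sum.inr _, Sum.inr _ => False
  symm := ⟨by
    rintro (v|e) (w|f) h
    · exact ⟨h.1.symm, fun a => h.2 a.symm⟩
    · exact h
    · exact h
    · exact h⟩
  loopless := ⟨by
    rintro (v|e) h
    · exact h.1 rfl
    · exact h⟩

/-- The central vertex join `G₁ ∨̇ G₂`: take `C(G₁)` together with `G₂` and join
every (original) vertex of `G₁` with every vertex of `G₂`. -/
def centralVertexJoin {V₁ V₂ : Type*} (G₁ : SimpleGraph V₁) (G₂ : SimpleGraph V₂) :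
    SimpleGraph ((V₁ ⊕ G₁.edgeSet) ⊕ V₂) where
  Adj x y :=
    match x, y with
    | Sum.inl a, Sum.inl b => (centralGraph G₁).Adj a b
    | Sum.inl (Sum.inl _), Sum.inr _ => True
    | Sum.inl (Sum.inr _), Sum.inr _ => False
    | Sum.inr _, Sum.inl (Sum.inl _) => True
    | Sum.inr _, Sum.inl (Sum.inr _) => False
    | Sum.inr u, Sum.inr w => G₂.Adj u w
  symm := ⟨by
    rintro ((v|e)|u) ((w|f)|t) h <;>
      first
        | exact (centralGraph G₁).adj_symm h
        | exact G₂.adj_symm h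
        | exact h⟩
  loopless := ⟨by
    rintro ((v|e)|u) h
    · exact (centralGraph G₁).irrefl h
    · exact (centralGraph G₁).irrefl h
    · exact G₂.irrefl h⟩
open Module


lemma aeval_eq_comp (p q : ℝ[X]) : aeval q p = p.comp q := by
  rw [aeval_def, Polynomial.comp, ← Polynomial.algebraMap_eq]

lemma charmatrix_sub_smul_one {n : Type*} [Fintype n] [DecidableEq n]
    (M : Matrix n n ℝ) (μ : ℝ) :
    charmatrix (M - μ • 1) = (charmatrix M).map (aeval (X + C μ) : ℝ[X] →ₐ[ℝ] ℝ[X]) := by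
  ext i j
  by_cases h : i = j
  · subst h
    simp only [charmatrix_apply_eq, Matrix.map_apply, Matrix.sub_apply, Matrix.smul_apply,
      Matrix.one_apply_eq, map_sub, aeval_X, aeval_C, Polynomial.algebraMap_eq, smul_eq_mul,
      mul_one, map_sub, Polynomial.C_sub]
    ring_nf
  · simp only [Ne.symm, Matrix.map_apply, charmatrix_apply_ne _ _ _ h, Matrix.sub_apply,
      Matrix.smul_apply, Matrix.one_apply_ne h, smul_eq_mul, mul_zero, sub_zero, map_neg,
      aeval_C, Polynomial.algebraMap_eq]

lemma charpoly_sub_smul_one {n : Type*} [Fintype n] [DecidableEq n]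
    (M : Matrix n n ℝ) (μ : ℝ) :
    (M - μ • 1).charpoly = M.charpoly.comp (X + C μ) := by
  rw [Matrix.charpoly, charmatrix_sub_smul_one]
  calc ((charmatrix M).map (aeval (X + C μ) : ℝ[X] →ₐ[ℝ] ℝ[X])).det
      = (aeval (X + C μ)) (charmatrix M).det := by
        rw [AlgHom.map_det, AlgHom.mapMatrix_apply]
    _ = M.charpoly.comp (X + C μ) := aeval_eq_comp _ _

lemma le_rootMultiplicity_of_finrank_ker {n : Type*} [Fintype n] [DecidableEq n]
    (M : Matrix n n ℝ) (μ : ℝ) (k : ℕ)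
    (h : k ≤ finrank ℝ (LinearMap.ker (M.mulVecLin - μ • LinearMap.id))) :
    k ≤ M.charpoly.rootMultiplicity μ := by
  set N := M - μ • 1 with hN
  have hNlin : N.mulVecLin = M.mulVecLin - μ • LinearMap.id := by
    apply LinearMap.ext; intro v
    simp [Matrix.mulVecLin_apply, hN, Matrix.sub_mulVec, Matrix.smul_mulVec,
      Matrix.one_mulVec]
  rw [← hNlin] at h
  have hφ : LinearMap.charpoly N.mulVecLin = N.charpoly := by
    rw [← LinearMap.charpoly_toMatrix N.mulVecLin (Pi.basisFun ℝ n),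
      LinearMap.toMatrix_eq_toMatrix', ← Matrix.toLin'_apply', LinearMap.toMatrix'_toLin']
  have hker : k ≤ natTrailingDegree N.charpoly := by
    rw [← hφ, ← LinearMap.finrank_maxGenEigenspace_zero_eq]
    refine h.trans (Submodule.finrank_mono ?_)
    intro x hx
    rw [Module.End.mem_maxGenEigenspace]
    exact ⟨1, by simpa using hx⟩
  have hdvd : X ^ k ∣ N.charpoly := X_pow_dvd_iff.mpr fun d hd =>
    coeff_eq_zero_of_lt_natTrailingDegree (lt_of_lt_of_le hd hker)
  have hcomp : N.charpoly = M.charpoly.comp (X + C μ) := charpoly_sub_smul_one M μ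
  have hdvd2 : (X - C μ) ^ k ∣ M.charpoly := by
    obtain ⟨q, hq⟩ := hdvd
    refine ⟨q.comp (X - C μ), ?_⟩
    have : N.charpoly.comp (X - C μ) = M.charpoly := by
      rw [hcomp, comp_assoc, add_comp, X_comp, C_comp, sub_add_cancel, comp_X]
    rw [← this, hq, mul_comp, pow_comp, X_comp]
  exact (le_rootMultiplicity_iff (M.charpoly_monic.ne_zero)).mpr hdvd2


set_option maxHeartbeats 1000000 in
/-- 1 is a normalized Laplacian eigenvalue of the central vertex join
G₁ ∨̇ G₂ with multiplicity at least m₁ - n₁ (when m₁ > n₁). -/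
theorem stmt14 {V₁ V₂ : Type*} [Fintype V₁] [Fintype V₂]
    (G₁ : SimpleGraph V₁) (G₂ : SimpleGraph V₂) (r₁ r₂ : ℕ)
    (h₁ : G₁.IsRegularOfDegree r₁) (h₂ : G₂.IsRegularOfDegree r₂)
    (hmn : Fintype.card V₁ < G₁.edgeFinset.card) :
    G₁.edgeFinset.card - Fintype.card V₁ ≤
      (normLap (centralVertexJoin G₁ G₂)).charpoly.rootMultiplicity 1 := by
  letI : DecidableEq ((V₁ ⊕ ↥G₁.edgeSet) ⊕ V₂) := fun a b => Classical.propDecidable _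
  set J := centralVertexJoin G₁ G₂ with hJ
  set M := normLap J with hM
  set d : (V₁ ⊕ ↥G₁.edgeSet) ⊕ V₂ → ℝ := fun v => (Real.sqrt (J.degree v))⁻¹ with hd
  let ι : (↥G₁.edgeSet → ℝ) →ₗ[ℝ] (((V₁ ⊕ ↥G₁.edgeSet) ⊕ V₂) → ℝ) :=
    { toFun := fun x => Sum.elim (Sum.elim (fun _ => (0:ℝ)) x) (fun _ => 0)
      map_add' := by intro x y; funext w; rcases w with (v|e)|u <;> simp
      map_smul' := by intro c x; funext w; rcases w with (v|e)|u <;> simp }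
  let S : (↥G₁.edgeSet → ℝ) →ₗ[ℝ] (((V₁ ⊕ ↥G₁.edgeSet) ⊕ V₂) → ℝ) :=
    (M.mulVecLin - (1:ℝ) • LinearMap.id) ∘ₗ ι
  let π : (((V₁ ⊕ ↥G₁.edgeSet) ⊕ V₂) → ℝ) →ₗ[ℝ] (V₁ → ℝ) :=
    LinearMap.funLeft ℝ ℝ (fun v => Sum.inl (Sum.inl v))
  let j : (V₁ → ℝ) →ₗ[ℝ] (((V₁ ⊕ ↥G₁.edgeSet) ⊕ V₂) → ℝ) :=
    { toFun := fun y => Sum.elim (Sum.elim y (fun _ => 0)) (fun _ => 0)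
      map_add' := by intro x y; funext w; rcases w with (v|e)|u <;> simp
      map_smul' := by intro c x; funext w; rcases w with (v|e)|u <;> simp }
  have key : ∀ (x : ↥G₁.edgeSet → ℝ) (w : (V₁ ⊕ ↥G₁.edgeSet) ⊕ V₂),
      (∀ v : V₁, w ≠ Sum.inl (Sum.inl v)) → S x w = 0 := by
    intro x w hw
    have h0 : S x w = (M *ᵥ (ι x)) w - ι x w := by
      simp [S, Matrix.mulVecLin_apply]
    rw [h0, hM]
    unfold normLap
    rw [Matrix.sub_mulVec, Pi.sub_apply, Matrix.one_mulVec, sub_sub_cancel_left, neg_eq_zero,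
      Matrix.mulVec, dotProduct]
    refine Finset.sum_eq_zero fun u _ => ?_
    rw [Matrix.mul_diagonal, Matrix.diagonal_mul]
    rcases u with (v|e)|s
    · have : ι x (Sum.inl (Sum.inl v)) = 0 := rfl
      rw [this, mul_zero]
    · have hadj : ¬ J.Adj w (Sum.inl (Sum.inr e)) := by
        rcases w with (v|f)|t
        · exact absurd rfl (hw v)
        · intro h; exact h
        · intro h; exact h
      rw [SimpleGraph.adjMatrix_apply, if_neg hadj]
      ring
    · have : ι x (Sum.inr s) = 0 := rfl
      rw [this, mul_zero]
  have hS : S = j ∘ₗ (π ∘ₗ S) := by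
    refine LinearMap.ext fun x => funext fun w => ?_
    rcases w with (v|e)|u
    · rfl
    · exact (key x _ (by simp)).trans (rfl : (0:ℝ) = _)
    · exact (key x _ (by simp)).trans (rfl : (0:ℝ) = _)
  have hrank : finrank ℝ (LinearMap.range S) ≤ Fintype.card V₁ := by
    calc finrank ℝ (LinearMap.range S) ≤ finrank ℝ (LinearMap.range j) :=
          Submodule.finrank_mono (by rw [hS]; exact LinearMap.range_comp_le_range _ _)
      _ ≤ finrank ℝ (V₁ → ℝ) := LinearMap.finrank_range_le j
      _ = Fintype.card V₁ := Module.finrank_pi ℝ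
  have hm : finrank ℝ (↥G₁.edgeSet → ℝ) = G₁.edgeFinset.card := by
    rw [Module.finrank_pi, SimpleGraph.edgeFinset, Set.toFinset_card]
  have hnull := LinearMap.finrank_range_add_finrank_ker S
  have hkerS : G₁.edgeFinset.card - Fintype.card V₁ ≤ finrank ℝ (LinearMap.ker S) := by
    omega
  have hinj : Function.Injective ι := by
    intro x y h
    funext e
    exact congrFun h (Sum.inl (Sum.inr e))
  let ι' : LinearMap.ker S →ₗ[ℝ] LinearMap.ker (M.mulVecLin - (1:ℝ) • LinearMap.id) :=
    LinearMap.codRestrict _ (ι ∘ₗ (LinearMap.ker S).subtype) (fun c => c.2)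
  have hinj' : Function.Injective ι' := by
    intro a b h
    exact Subtype.ext (hinj (congrArg Subtype.val h))
  have hle := LinearMap.finrank_le_finrank_of_injective hinj'
  have goal2 := le_rootMultiplicity_of_finrank_ker M 1 (G₁.edgeFinset.card - Fintype.card V₁)
    (le_trans hkerS hle)
  convert goal2 using 3
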